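/- Let G=(V,E) be the hypergraph with V = {v_1,…,v_8} and E = {e_0,e_1,e_2,e_3,e_4}, where e_0 = {v_1,v_2,v_3,v_4}, e_1 = {v_1,v_2,v_5}, e_2 = {v_2,v_3,v_6}, e_3 = {v_3,v_4,v_7}, e_4 = {v_1,v_4,v_8}. For every recursive McCormick relaxation of the multilinear set S_G, there exists a point z ∈ MP^RMC_G violating at least one of the six flower inequalities centered at e_0, namely ∑_{v ∈ e_0 \ e_i} z_v + z_{e_i} − z_{e_0} ≤ 2 for i ∈ {1,2,3,4} and z_{e_i} + z_{e_j} − z_{e_0} ≤ 1 for (i,j) ∈ {(1,3),(2,4)}; in particular, the flower relaxation MP^F_G is a strict subset of MP^RMC_G for every RMC of S_G. -/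

import Mathlib

open Finset

/-- A hypergraph: a finite set of nodes together with a set of edges,
each a subset of the nodes of cardinality at least two. -/
structure MHypergraph (α : Type*) [DecidableEq α] where
  V : Finset α
  E : Finset (Finset α)
  edge_sub : ∀ e ∈ E, e ⊆ V
  edge_card : ∀ e ∈ E, 2 ≤ e.card

section Defs

variable {α : Type*} [DecidableEq α]

/-- Membership in the multilinear set `S_G`; a point is encoded as a single function
`z : Finset α → ℝ`, with node variables `z {v}` and edge variables `z e`. -/
def MultilinearSet (G : MHypergraph α) (z : Finset α → ℝ) : Prop :=
  (∀ v ∈ G.V, z {v} = 0 ∨ z {v} = 1) ∧ ∀ e ∈ G.E, z e = ∏ v ∈ e, z {v}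

/-- Membership in the standard linearization `MP^LP_G`. -/
def StdLin (G : MHypergraph α) (z : Finset α → ℝ) : Prop :=
  (∀ v ∈ G.V, z {v} ≤ 1) ∧
    ∀ e ∈ G.E, 0 ≤ z e ∧ (∑ v ∈ e, z {v}) - (e.card : ℝ) + 1 ≤ z e ∧ ∀ v ∈ e, z e ≤ z {v}

/-- The (extended) flower inequality centered at `e₀` with set of neighbors `T`. -/
def ExtFlowerIneq (z : Finset α → ℝ) (e₀ : Finset α) (T : Finset (Finset α)) : Prop :=
  (∑ v ∈ e₀ \ T.biUnion id, z {v}) + (∑ e ∈ T, z e) - z e₀ ≤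
    ((e₀ \ T.biUnion id).card : ℝ) + (T.card : ℝ) - 1

/-- `T` is a valid set of neighbors for an extended flower inequality centered at `e₀`:
a nonempty set of edges, distinct from `e₀`, adjacent to `e₀`, with `γ_i ≥ 2` for all `i ∈ T`. -/
def ValidEFNeighbors (G : MHypergraph α) (e₀ : Finset α) (T : Finset (Finset α)) : Prop :=
  T.Nonempty ∧ (∀ e ∈ T, e ∈ G.E ∧ e ≠ e₀ ∧ (e ∩ e₀).Nonempty) ∧
    ∀ i ∈ T, 2 ≤ ((e₀ ∩ i) \ (T.erase i).biUnion (fun j => e₀ ∩ j)).card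

/-- Membership in the extended flower relaxation `MP^EF_G`. -/
def MPEF (G : MHypergraph α) (z : Finset α → ℝ) : Prop :=
  StdLin G z ∧ ∀ e₀ ∈ G.E, ∀ T : Finset (Finset α), ValidEFNeighbors G e₀ T → ExtFlowerIneq z e₀ T

/-- `T` is a valid set of neighbors for a flower inequality centered at `e₀`. -/
def ValidFlowerNeighbors (G : MHypergraph α) (e₀ : Finset α) (T : Finset (Finset α)) : Prop :=
  T.Nonempty ∧ (∀ e ∈ T, e ∈ G.E ∧ e ≠ e₀ ∧ 2 ≤ (e₀ ∩ e).card) ∧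
    ∀ i ∈ T, ∀ j ∈ T, i ≠ j → e₀ ∩ i ∩ j = ∅

/-- Membership in the flower relaxation `MP^F_G`. -/
def MPF (G : MHypergraph α) (z : Finset α → ℝ) : Prop :=
  StdLin G z ∧ ∀ e₀ ∈ G.E, ∀ T : Finset (Finset α), ValidFlowerNeighbors G e₀ T → ExtFlowerIneq z e₀ T

/-- A recursive McCormick relaxation (RMC) of the multilinear set `S_G`:
a set `Ebar` of artificial edges together with, for each `f ∈ E ∪ Ebar`,
a partition `f = J f ∪ K f` into two disjoint nonempty parts, each a singleton
or an element of `E ∪ Ebar`, such that every artificial edge is reachable from some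
edge of `E` by iteratively passing to non-singleton parts. -/
structure RMC {α : Type*} [DecidableEq α] (G : MHypergraph α) where
  Ebar : Finset (Finset α)
  ebar_sub : ∀ f ∈ Ebar, f ⊆ G.V
  ebar_card : ∀ f ∈ Ebar, 2 ≤ f.card
  ebar_new : ∀ f ∈ Ebar, f ∉ G.E
  J : Finset α → Finset α
  K : Finset α → Finset α
  union_eq : ∀ f ∈ G.E ∪ Ebar, J f ∪ K f = f
  disj : ∀ f ∈ G.E ∪ Ebar, Disjoint (J f) (K f)
  J_ne : ∀ f ∈ G.E ∪ Ebar, (J f).Nonempty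
  K_ne : ∀ f ∈ G.E ∪ Ebar, (K f).Nonempty
  J_mem : ∀ f ∈ G.E ∪ Ebar, (J f).card = 1 ∨ J f ∈ G.E ∪ Ebar
  K_mem : ∀ f ∈ G.E ∪ Ebar, (K f).card = 1 ∨ K f ∈ G.E ∪ Ebar
  reach : ∀ f ∈ Ebar, ∃ e ∈ G.E, Relation.ReflTransGen
    (fun a b => a ∈ G.E ∪ Ebar ∧ 2 ≤ b.card ∧ (b = J a ∨ b = K a)) e f

/-- One step of the recursive decomposition: passing from `a` to a non-singleton part of it. -/
def RMC.step {α : Type*} [DecidableEq α] {G : MHypergraph α} (M : RMC G) (a b : Finset α) : Prop :=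
  a ∈ G.E ∪ M.Ebar ∧ 2 ≤ b.card ∧ (b = M.J a ∨ b = M.K a)

/-- The recursive sequence `R_e` of `e`: all sets obtained from `e` by iteratively
passing to non-singleton parts of the partitions (with `e ∈ R_e`). -/
def RMC.Rseq {α : Type*} [DecidableEq α] {G : MHypergraph α} (M : RMC G) (e : Finset α) :
    Set (Finset α) :=
  {f | Relation.ReflTransGen M.step e f}

/-- The RMC is non-overlapping if the recursive sequences of distinct edges are disjoint. -/
def RMC.NonOverlapping {α : Type*} [DecidableEq α] {G : MHypergraph α} (M : RMC G) : Prop :=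
  ∀ e ∈ G.E, ∀ e' ∈ G.E, e ≠ e' → M.Rseq e ∩ M.Rseq e' = ∅

/-- The point `w` (including artificial coordinates) satisfies all McCormick
inequalities of the RMC. -/
def RMC.McCormick {α : Type*} [DecidableEq α] {G : MHypergraph α} (M : RMC G)
    (w : Finset α → ℝ) : Prop :=
  ∀ f ∈ G.E ∪ M.Ebar,
    0 ≤ w f ∧ w (M.J f) + w (M.K f) - 1 ≤ w f ∧ w f ≤ w (M.J f) ∧ w f ≤ w (M.K f)

/-- Membership in `MP^RMC_G`, the projection of the RMC polytope onto the coordinates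
indexed by `V ∪ E`: the point `z` admits an extension to the artificial variables
satisfying all McCormick inequalities of the RMC. -/
def RMC.MPRMC {α : Type*} [DecidableEq α] {G : MHypergraph α} (M : RMC G)
    (z : Finset α → ℝ) : Prop :=
  ∃ w : Finset α → ℝ, (∀ v ∈ G.V, w {v} = z {v}) ∧ (∀ e ∈ G.E, w e = z e) ∧ M.McCormick w

/-- A flower partition `Te` of the edge `e`: a partition of `e` into pairwise disjoint
nonempty parts, each a singleton subset of `e` or an element of `R_e`, such that every
part lying in `Ebar` belongs to the recursive sequence of some other original edge. -/
def RMC.FlowerPartition {α : Type*} [DecidableEq α] {G : MHypergraph α} (M : RMC G)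
    (e : Finset α) (Te : Finset (Finset α)) : Prop :=
  (∀ p ∈ Te, p.Nonempty) ∧
  (∀ p ∈ Te, ∀ q ∈ Te, p ≠ q → Disjoint p q) ∧
  Te.biUnion id = e ∧
  (∀ p ∈ Te, (p.card = 1 ∧ p ⊆ e) ∨ p ∈ M.Rseq e) ∧
  ∀ p ∈ Te, p ∈ M.Ebar → ∃ e' ∈ G.E, e' ≠ e ∧ p ∈ M.Rseq e'

/-- The McCormick system for the bilinear equation `w = u * v` over the unit hypercube. -/
def McSys (u v w : ℝ) : Prop := 0 ≤ w ∧ u + v - 1 ≤ w ∧ w ≤ u ∧ w ≤ v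

end Defs


def f₀ : Finset ℕ := {1,2,3,4}
def f₁ : Finset ℕ := {1,2,5}
def f₂ : Finset ℕ := {2,3,6}
def f₃ : Finset ℕ := {3,4,7}
def f₄ : Finset ℕ := {1,4,8}

def G18 : MHypergraph ℕ where
  V := {1,2,3,4,5,6,7,8}
  E := {f₀, f₁, f₂, f₃, f₄}
  edge_sub := by decide
  edge_card := by decide

/-!
Strictness. Every RMC splits `f₀ = {1,2,3,4}` into two parts, and one of the pairs `f₀ ∩ fᵢ`
crosses the split. With `x = 1/2` on `fᵢ` and `x = 1` elsewhere, the product point `∏ x`, set to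
`0` on every set from which `f₀` is reachable, satisfies every McCormick inequality of the RMC but
violates the flower inequality centered at `f₀` with neighbour `fᵢ`.

Inclusion. A point `z` of the flower relaxation is extended to every set `S` of nodes by the
largest bound `1 - ∑_{e ∈ B} (1 - z_e) - ∑_{v ∈ S \ ⋃ B} (1 - z_v)` over sets `B` of edges, or `0`.
This extension is antitone and satisfies `w_J + w_K - 1 ≤ w_{J ∪ K}`, so it meets every McCormick
system. It agrees with `z` on the edges because, after discarding edges that cover at most one
further node, each such bound at an edge of this hypergraph is a standard or flower inequality.
-/

section General

variable {α : Type*} [DecidableEq α] {G : MHypergraph α}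

theorem McSys.of_mul {a b : ℝ} (ha₀ : 0 ≤ a) (ha₁ : a ≤ 1) (hb₀ : 0 ≤ b) (hb₁ : b ≤ 1) :
    McSys a b (a * b) :=
  ⟨mul_nonneg ha₀ hb₀, by nlinarith, mul_le_of_le_one_right ha₀ hb₁,
    mul_le_of_le_one_left hb₀ ha₁⟩

theorem McSys.of_add_le_one {a b : ℝ} (ha : 0 ≤ a) (hb : 0 ≤ b) (hab : a + b ≤ 1) :
    McSys a b 0 :=
  ⟨le_rfl, by linarith, ha, hb⟩

namespace RMC

variable (M : RMC G) {f : Finset α}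

theorem J_subset (hf : f ∈ G.E ∪ M.Ebar) : M.J f ⊆ f :=
  (M.union_eq f hf).le.trans' subset_union_left

theorem K_subset (hf : f ∈ G.E ∪ M.Ebar) : M.K f ⊆ f :=
  (M.union_eq f hf).le.trans' subset_union_right

theorem K_eq_sdiff (hf : f ∈ G.E ∪ M.Ebar) : M.K f = f \ M.J f :=
  calc M.K f = (M.J f ∪ M.K f) \ M.J f := by
        rw [union_sdiff_left, (M.disj f hf).symm.sdiff_eq_left]
    _ = f \ M.J f := by rw [M.union_eq f hf]

theorem subset_V (hf : f ∈ G.E ∪ M.Ebar) : f ⊆ G.V := by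
  rcases mem_union.1 hf with hf | hf
  exacts [G.edge_sub f hf, M.ebar_sub f hf]

theorem subset_of_step {a b : Finset α} (h : M.step a b) : b ⊆ a := by
  obtain ⟨ha, -, rfl | rfl⟩ := h
  exacts [M.J_subset ha, M.K_subset ha]

theorem subset_of_mem_Rseq {S T : Finset α} (h : T ∈ M.Rseq S) : T ⊆ S := by
  induction h with
  | refl => exact Subset.rfl
  | tail _ hstep ih => exact (M.subset_of_step hstep).trans ih

end RMC

namespace RMC

variable (M : RMC G)

open Classical in
noncomputable def zeroedProduct (e₀ : Finset α) (x : α → ℝ) (S : Finset α) : ℝ :=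
  if e₀ ∈ M.Rseq S then 0 else ∏ v ∈ S, x v

variable {M} {e₀ : Finset α} {x : α → ℝ}

theorem zeroedProduct_self : M.zeroedProduct e₀ x e₀ = 0 :=
  if_pos Relation.ReflTransGen.refl

theorem zeroedProduct_of_not_subset {S : Finset α} (h : ¬ e₀ ⊆ S) :
    M.zeroedProduct e₀ x S = ∏ v ∈ S, x v :=
  if_neg fun hr => h (M.subset_of_mem_Rseq hr)

/-- Zeroing every set above `e₀` breaks no McCormick system except the one at `e₀` itself,
whose lower bound is what `hsplit` provides. -/
theorem mcCormick_zeroedProduct (he₀ : 2 ≤ e₀.card) (hx₀ : ∀ v, 0 ≤ x v) (hx₁ : ∀ v, x v ≤ 1)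
    (hsplit : ∏ v ∈ M.J e₀, x v + ∏ v ∈ M.K e₀, x v ≤ 1) :
    M.McCormick (M.zeroedProduct e₀ x) := by
  classical
  set w := M.zeroedProduct e₀ x
  have hprod₀ (S : Finset α) : 0 ≤ ∏ v ∈ S, x v := prod_nonneg fun v _ => hx₀ v
  have hprod₁ (S : Finset α) : ∏ v ∈ S, x v ≤ 1 := prod_le_one (fun v _ => hx₀ v) fun v _ => hx₁ v
  have hw₀ (S : Finset α) : 0 ≤ w S := by
    unfold w zeroedProduct; split_ifs
    exacts [le_rfl, hprod₀ S]
  have hw_le (S : Finset α) : w S ≤ ∏ v ∈ S, x v := by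
    unfold w zeroedProduct; split_ifs
    exacts [hprod₀ S, le_rfl]
  intro f hf
  by_cases hr : e₀ ∈ M.Rseq f
  · rw [show w f = 0 from if_pos hr]
    refine McSys.of_add_le_one (hw₀ _) (hw₀ _) ?_
    rcases hr.cases_head with rfl | ⟨c, ⟨-, -, rfl | rfl⟩, hc⟩
    · linarith [hw_le (M.J f), hw_le (M.K f)]
    · linarith [show w (M.J f) = 0 from if_pos hc, (hw_le (M.K f)).trans (hprod₁ _)]
    · linarith [show w (M.K f) = 0 from if_pos hc, (hw_le (M.J f)).trans (hprod₁ _)]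
  · have hpart {p : Finset α} (hp : p = M.J f ∨ p = M.K f) : w p = ∏ v ∈ p, x v := by
      refine if_neg fun hrp => hr (Relation.ReflTransGen.head ⟨hf, ?_, hp⟩ hrp)
      exact he₀.trans (card_le_card (M.subset_of_mem_Rseq hrp))
    have hmul : w f = w (M.J f) * w (M.K f) := by
      rw [show w f = ∏ v ∈ f, x v from if_neg hr, hpart (Or.inl rfl), hpart (Or.inr rfl),
        ← prod_union (M.disj f hf), M.union_eq f hf]
    rw [hmul]
    exact McSys.of_mul (hw₀ _) ((hw_le _).trans (hprod₁ _)) (hw₀ _) ((hw_le _).trans (hprod₁ _))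

end RMC

/-- For a binary point and a set `B` of edges, `∏_{v ∈ S} z_v ≥ coverBound z B S`. -/
def coverBound (z : Finset α → ℝ) (B : Finset (Finset α)) (S : Finset α) : ℝ :=
  1 - ∑ e ∈ B, (1 - z e) - ∑ v ∈ S \ B.biUnion id, (1 - z {v})

theorem extFlowerIneq_iff_coverBound_le {z : Finset α → ℝ} {e : Finset α}
    {T : Finset (Finset α)} : ExtFlowerIneq z e T ↔ coverBound z T e ≤ z e := by
  simp only [ExtFlowerIneq, coverBound, sum_sub_distrib, sum_const, nsmul_eq_mul, mul_one]
  constructor <;> intro h <;> linarith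

theorem extFlowerIneq_singleton_iff {z : Finset α → ℝ} {e k : Finset α} :
    ExtFlowerIneq z e {k} ↔ ∑ v ∈ e \ k, z {v} + z k - z e ≤ (e \ k).card := by
  simp [ExtFlowerIneq]

theorem coverBound_singleton_self (z : Finset α → ℝ) (e : Finset α) :
    coverBound z {e} e = z e := by
  simp [coverBound]

theorem coverBound_empty_singleton (z : Finset α → ℝ) (v : α) :
    coverBound z ∅ {v} = z {v} := by
  simp [coverBound]

theorem RMC.exists_mprmc_not_extFlowerIneq (M : RMC G) {e₀ k : Finset α} (he₀ : e₀ ∈ G.E)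
    (hk : ¬ e₀ ⊆ k) (hJ : (M.J e₀ ∩ k).Nonempty) (hK : (M.K e₀ ∩ k).Nonempty) :
    ∃ z, M.MPRMC z ∧ ¬ ExtFlowerIneq z e₀ {k} := by
  classical
  set x : α → ℝ := fun v => if v ∈ k then 1 / 2 else 1
  have hx₀ (v : α) : 0 < x v := by unfold x; split_ifs <;> norm_num
  have hx₁ (v : α) : x v ≤ 1 := by unfold x; split_ifs <;> norm_num
  have hhalf {S : Finset α} (hS : (S ∩ k).Nonempty) : ∏ v ∈ S, x v ≤ 1 / 2 := by
    obtain ⟨v, hv⟩ := hS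
    rw [mem_inter] at hv
    calc ∏ u ∈ S, x u ≤ ∏ u ∈ {v}, x u :=
          prod_anti_set_of_le_one (fun u => (hx₀ u).le) hx₁ (singleton_subset_iff.2 hv.1)
      _ = 1 / 2 := by simp [x, hv.2]
  have hmc : M.McCormick (M.zeroedProduct e₀ x) := M.mcCormick_zeroedProduct
    (G.edge_card e₀ he₀) (fun v => (hx₀ v).le) hx₁ (by linarith [hhalf hJ, hhalf hK])
  have hnode {v : α} (hv : v ∈ e₀ \ k) : M.zeroedProduct e₀ x {v} = 1 := by
    have hsub : ¬ e₀ ⊆ {v} := fun h => by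
      have := (G.edge_card e₀ he₀).trans (card_le_card h); simp at this
    rw [RMC.zeroedProduct_of_not_subset hsub, prod_singleton]
    simp [x, (mem_sdiff.1 hv).2]
  refine ⟨M.zeroedProduct e₀ x, ⟨_, fun _ _ => rfl, fun _ _ => rfl, hmc⟩, ?_⟩
  rw [extFlowerIneq_iff_coverBound_le, coverBound, singleton_biUnion, id, sum_singleton,
    sum_eq_zero fun v hv => by rw [hnode hv, sub_self], RMC.zeroedProduct_self,
    RMC.zeroedProduct_of_not_subset hk, not_le]
  linarith [prod_pos fun v (_ : v ∈ k) => hx₀ v]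

theorem sum_biUnion_le_sum_sum {ι : Type*} [DecidableEq ι] {s : Finset ι} {t : ι → Finset α}
    {d : α → ℝ} (hd : ∀ a ∈ s.biUnion t, 0 ≤ d a) :
    ∑ a ∈ s.biUnion t, d a ≤ ∑ i ∈ s, ∑ a ∈ t i, d a := by
  induction s using Finset.induction_on with
  | empty => simp
  | insert i s hi ih =>
    rw [biUnion_insert] at hd ⊢
    rw [sum_insert hi]
    have hinter : 0 ≤ ∑ a ∈ t i ∩ s.biUnion t, d a :=
      sum_nonneg fun a ha => hd a (mem_union_left _ (mem_of_mem_inter_left ha))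
    linarith [sum_union_inter (s₁ := t i) (s₂ := s.biUnion t) (f := d),
      ih fun a ha => hd a (mem_union_right _ ha)]

namespace StdLin

variable {z : Finset α → ℝ} (hz : StdLin G z)
include hz

theorem edge_le_one {e : Finset α} (he : e ∈ G.E) : z e ≤ 1 := by
  obtain ⟨v, hv⟩ := card_pos.1 (lt_of_lt_of_le two_pos (G.edge_card e he))
  exact ((hz.2 e he).2.2 v hv).trans (hz.1 v (G.edge_sub e he hv))

theorem node_nonneg {e : Finset α} (he : e ∈ G.E) {v : α} (hv : v ∈ e) : 0 ≤ z {v} :=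
  (hz.2 e he).1.trans ((hz.2 e he).2.2 v hv)

theorem coverBound_empty_le {e : Finset α} (he : e ∈ G.E) : coverBound z ∅ e ≤ z e := by
  have := (hz.2 e he).2.1
  simp only [coverBound, sum_empty, biUnion_empty, sdiff_empty, sum_sub_distrib, sum_const,
    nsmul_eq_mul, mul_one]
  linarith

theorem coverBound_le_one {B : Finset (Finset α)} {S : Finset α} (hB : B ⊆ G.E)
    (hS : S ⊆ G.V) : coverBound z B S ≤ 1 := by
  have h₁ : 0 ≤ ∑ e ∈ B, (1 - z e) :=
    sum_nonneg fun e he => sub_nonneg.2 (hz.edge_le_one (hB he))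
  have h₂ : 0 ≤ ∑ v ∈ S \ B.biUnion id, (1 - z {v}) :=
    sum_nonneg fun v hv => sub_nonneg.2 (hz.1 v (hS (mem_sdiff.1 hv).1))
  unfold coverBound
  linarith

theorem coverBound_anti {B : Finset (Finset α)} {S J : Finset α} (hS : S ⊆ G.V) (hJS : J ⊆ S) :
    coverBound z B S ≤ coverBound z B J := by
  have : ∑ v ∈ J \ B.biUnion id, (1 - z {v}) ≤ ∑ v ∈ S \ B.biUnion id, (1 - z {v}) :=
    sum_le_sum_of_subset_of_nonneg (sdiff_subset_sdiff hJS Subset.rfl)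
      fun v hv _ => sub_nonneg.2 (hz.1 v (hS (mem_sdiff.1 hv).1))
  unfold coverBound
  linarith

theorem coverBound_add_sub_one_le {B₁ B₂ : Finset (Finset α)} {J K : Finset α}
    (hB₁ : B₁ ⊆ G.E) (hJ : J ⊆ G.V) (hK : K ⊆ G.V) (hJK : Disjoint J K) :
    coverBound z B₁ J + coverBound z B₂ K - 1 ≤ coverBound z (B₁ ∪ B₂) (J ∪ K) := by
  set U := (B₁ ∪ B₂).biUnion id
  have hedges : ∑ e ∈ B₁ ∪ B₂, (1 - z e) ≤ ∑ e ∈ B₁, (1 - z e) + ∑ e ∈ B₂, (1 - z e) := by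
    rw [← sum_union_inter]
    exact le_add_of_nonneg_right
      (sum_nonneg fun e he => sub_nonneg.2 (hz.edge_le_one (hB₁ (mem_inter.1 he).1)))
  have hnodes : ∑ v ∈ (J ∪ K) \ U, (1 - z {v}) =
      ∑ v ∈ J \ U, (1 - z {v}) + ∑ v ∈ K \ U, (1 - z {v}) := by
    rw [union_sdiff_distrib, sum_union (hJK.mono sdiff_le sdiff_le)]
  have hJ' : ∑ v ∈ J \ U, (1 - z {v}) ≤ ∑ v ∈ J \ B₁.biUnion id, (1 - z {v}) :=
    sum_le_sum_of_subset_of_nonneg (sdiff_subset_sdiff Subset.rfl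
      (biUnion_subset_biUnion_of_subset_left _ subset_union_left)) fun v hv _ =>
        sub_nonneg.2 (hz.1 v (hJ (mem_sdiff.1 hv).1))
  have hK' : ∑ v ∈ K \ U, (1 - z {v}) ≤ ∑ v ∈ K \ B₂.biUnion id, (1 - z {v}) :=
    sum_le_sum_of_subset_of_nonneg (sdiff_subset_sdiff Subset.rfl
      (biUnion_subset_biUnion_of_subset_left _ subset_union_right)) fun v hv _ =>
        sub_nonneg.2 (hz.1 v (hK (mem_sdiff.1 hv).1))
  unfold coverBound
  linarith

/-- Each dropped edge `f` pays `1 - z f` in the bound, at least what the one node it alone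
covers would pay. -/
theorem coverBound_le_of_subset {B T : Finset (Finset α)} {S : Finset α} (hB : B ⊆ G.E)
    (hS : S ⊆ G.V) (hTB : T ⊆ B) (hdrop : ∀ f ∈ B \ T, ((S ∩ f) \ T.biUnion id).card ≤ 1) :
    coverBound z B S ≤ coverBound z T S := by
  set d : α → ℝ := fun v => 1 - z {v}
  set A := S \ B.biUnion id
  set C := (B \ T).biUnion fun f => (S ∩ f) \ T.biUnion id
  have hAC : A ∪ C ⊆ S := union_subset sdiff_subset
    (biUnion_subset.2 fun f _ => sdiff_subset.trans inter_subset_left)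
  have hd {v : α} (hv : v ∈ A ∪ C) : 0 ≤ d v := sub_nonneg.2 (hz.1 v (hS (hAC hv)))
  have hcover : S \ T.biUnion id ⊆ A ∪ C := by
    intro v hv
    rw [mem_sdiff] at hv
    by_cases hvB : v ∈ B.biUnion id
    · obtain ⟨f, hf, hvf⟩ := mem_biUnion.1 hvB
      have hfT : f ∉ T := fun hfT => hv.2 (mem_biUnion.2 ⟨f, hfT, hvf⟩)
      exact mem_union_right _ (mem_biUnion.2 ⟨f, mem_sdiff.2 ⟨hf, hfT⟩,
        mem_sdiff.2 ⟨mem_inter.2 ⟨hv.1, hvf⟩, hv.2⟩⟩)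
    · exact mem_union_left _ (mem_sdiff.2 ⟨hv.1, hvB⟩)
  have hedge (f : Finset α) (hf : f ∈ B \ T) : ∑ v ∈ (S ∩ f) \ T.biUnion id, d v ≤ 1 - z f := by
    have hfE := hB (mem_sdiff.1 hf).1
    rcases Nat.le_one_iff_eq_zero_or_eq_one.1 (hdrop f hf) with h | h
    · rw [card_eq_zero.1 h, sum_empty]
      linarith [hz.edge_le_one hfE]
    · obtain ⟨v, hv⟩ := card_eq_one.1 h
      have hvf : v ∈ f := (mem_inter.1 (mem_sdiff.1 (hv ▸ mem_singleton_self v)).1).2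
      rw [hv, sum_singleton]
      linarith [(hz.2 f hfE).2.2 v hvf]
  have h₁ : ∑ v ∈ S \ T.biUnion id, d v ≤ ∑ v ∈ A ∪ C, d v :=
    sum_le_sum_of_subset_of_nonneg hcover fun v hv _ => hd hv
  have h₂ := sum_union_inter (s₁ := A) (s₂ := C) (f := d)
  have h₃ : 0 ≤ ∑ v ∈ A ∩ C, d v := sum_nonneg fun v hv => hd (inter_subset_union hv)
  have h₄ : ∑ v ∈ C, d v ≤ ∑ f ∈ B \ T, (1 - z f) :=
    (sum_biUnion_le_sum_sum fun v hv => hd (mem_union_right _ hv)).trans (sum_le_sum hedge)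
  have h₅ : ∑ e ∈ B, (1 - z e) = ∑ e ∈ B \ T, (1 - z e) + ∑ e ∈ T, (1 - z e) :=
    (sum_sdiff hTB).symm
  unfold coverBound
  linarith

end StdLin

noncomputable def coverExt (G : MHypergraph α) (z : Finset α → ℝ) (S : Finset α) : ℝ :=
  max 0 (G.E.powerset.sup' (powerset_nonempty G.E) fun B => coverBound z B S)

section coverExt

variable {z : Finset α → ℝ}

theorem coverBound_le_coverExt {B : Finset (Finset α)} (hB : B ⊆ G.E) (S : Finset α) :
    coverBound z B S ≤ coverExt G z S :=
  (le_sup' (fun B => coverBound z B S) (mem_powerset.2 hB)).trans (le_max_right _ _)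

theorem coverExt_nonneg (S : Finset α) : 0 ≤ coverExt G z S := le_max_left _ _

theorem coverExt_le_iff {S : Finset α} {c : ℝ} :
    coverExt G z S ≤ c ↔ 0 ≤ c ∧ ∀ B ⊆ G.E, coverBound z B S ≤ c := by
  simp [coverExt, sup'_le_iff]

theorem exists_coverExt_eq (S : Finset α) :
    ∃ B ⊆ G.E, coverExt G z S = max 0 (coverBound z B S) := by
  obtain ⟨B, hB, h⟩ := exists_mem_eq_sup' (powerset_nonempty G.E) fun B => coverBound z B S
  exact ⟨B, mem_powerset.1 hB, by rw [coverExt, h]⟩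

namespace StdLin

variable (hz : StdLin G z)
include hz

theorem coverExt_anti {S J : Finset α} (hS : S ⊆ G.V) (hJS : J ⊆ S) :
    coverExt G z S ≤ coverExt G z J :=
  coverExt_le_iff.2 ⟨coverExt_nonneg J, fun _ hB =>
    (hz.coverBound_anti hS hJS).trans (coverBound_le_coverExt hB J)⟩

theorem coverExt_add_sub_one_le {J K : Finset α} (hJ : J ⊆ G.V) (hK : K ⊆ G.V)
    (hJK : Disjoint J K) : coverExt G z J + coverExt G z K - 1 ≤ coverExt G z (J ∪ K) := by
  obtain ⟨B₁, hB₁, hJeq⟩ := exists_coverExt_eq (G := G) (z := z) J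
  obtain ⟨B₂, hB₂, hKeq⟩ := exists_coverExt_eq (G := G) (z := z) K
  have h₁ := hz.coverBound_le_one hB₁ hJ
  have h₂ := hz.coverBound_le_one hB₂ hK
  have h₃ := (hz.coverBound_add_sub_one_le hB₁ hJ hK hJK (B₂ := B₂)).trans
    (coverBound_le_coverExt (union_subset hB₁ hB₂) (J ∪ K))
  rw [hJeq, hKeq]
  have := coverExt_nonneg (G := G) (z := z) (J ∪ K)
  rcases le_total 0 (coverBound z B₁ J) with hJ₀ | hJ₀ <;>
    rcases le_total 0 (coverBound z B₂ K) with hK₀ | hK₀ <;>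
    simp only [max_eq_right, max_eq_left, hJ₀, hK₀] <;> linarith

theorem coverExt_singleton {v : α} (hv : v ∈ G.V) (hv₀ : 0 ≤ z {v}) :
    coverExt G z {v} = z {v} := by
  refine le_antisymm (coverExt_le_iff.2 ⟨hv₀, fun B hB => ?_⟩) ?_
  · calc coverBound z B {v} ≤ coverBound z ∅ {v} :=
          hz.coverBound_le_of_subset hB (singleton_subset_iff.2 hv) (empty_subset B)
            fun f _ => (card_le_card (sdiff_subset.trans inter_subset_left)).trans
              (card_singleton v).le
      _ = z {v} := coverBound_empty_singleton z v
  · simpa [coverBound_empty_singleton] using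
      coverBound_le_coverExt (G := G) (z := z) (empty_subset _) {v}

theorem coverExt_edge {e : Finset α} (he : e ∈ G.E)
    (hcover : ∀ B ⊆ G.E, coverBound z B e ≤ z e) : coverExt G z e = z e :=
  le_antisymm (coverExt_le_iff.2 ⟨(hz.2 e he).1, hcover⟩)
    (coverBound_singleton_self z e ▸ coverBound_le_coverExt (singleton_subset_iff.2 he) e)

end StdLin

end coverExt

theorem RMC.mprmc_of_coverBound_le (M : RMC G) {z : Finset α → ℝ} (hz : StdLin G z)
    (hV : ∀ v ∈ G.V, 0 ≤ z {v}) (hcover : ∀ e ∈ G.E, ∀ B ⊆ G.E, coverBound z B e ≤ z e) :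
    M.MPRMC z := by
  refine ⟨coverExt G z, fun v hv => hz.coverExt_singleton hv (hV v hv),
    fun e he => hz.coverExt_edge he (hcover e he), fun f hf => ?_⟩
  have hfV := M.subset_V hf
  refine ⟨coverExt_nonneg f, ?_, hz.coverExt_anti hfV (M.J_subset hf),
    hz.coverExt_anti hfV (M.K_subset hf)⟩
  simpa only [M.union_eq f hf] using hz.coverExt_add_sub_one_le
    ((M.J_subset hf).trans hfV) ((M.K_subset hf).trans hfV) (M.disj f hf)

def FlowerCovered (G : MHypergraph α) (e : Finset α) : Prop :=
  ∀ B ∈ (G.E.erase e).powerset, ∃ T ∈ B.powerset, (T = ∅ ∨ ValidFlowerNeighbors G e T) ∧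
    ∀ f ∈ B \ T, ((e ∩ f) \ T.biUnion id).card ≤ 1

theorem MPF.coverBound_le {z : Finset α → ℝ} (hz : MPF G z) {e : Finset α} (he : e ∈ G.E)
    (hcov : FlowerCovered G e) {B : Finset (Finset α)} (hB : B ⊆ G.E) :
    coverBound z B e ≤ z e := by
  have heV := G.edge_sub e he
  by_cases heB : e ∈ B
  · calc coverBound z B e ≤ coverBound z {e} e :=
          hz.1.coverBound_le_of_subset hB heV (singleton_subset_iff.2 heB) fun f _ => by
            simp [sdiff_eq_empty_iff_subset.2 inter_subset_left]
      _ = z e := coverBound_singleton_self z e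
  · obtain ⟨T, hTB, hT, hdrop⟩ := hcov B (mem_powerset.2 (subset_erase.2 ⟨hB, heB⟩))
    refine (hz.1.coverBound_le_of_subset hB heV (mem_powerset.1 hTB) hdrop).trans ?_
    rcases hT with rfl | hT
    · exact hz.1.coverBound_empty_le he
    · exact extFlowerIneq_iff_coverBound_le.1 (hz.2 e he T hT)

theorem RMC.mprmc_of_mpf (M : RMC G) (hcov : ∀ e ∈ G.E, FlowerCovered G e)
    (hV : ∀ v ∈ G.V, ∃ e ∈ G.E, v ∈ e) {z : Finset α → ℝ} (hz : MPF G z) : M.MPRMC z :=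
  M.mprmc_of_coverBound_le hz.1
    (fun v hv => by obtain ⟨e, he, hve⟩ := hV v hv; exact hz.1.node_nonneg he hve)
    fun e he _ hB => hz.coverBound_le he (hcov e he) hB

end General

theorem flowerCovered_G18 : ∀ e ∈ G18.E, FlowerCovered G18 e := by
  unfold FlowerCovered ValidFlowerNeighbors
  decide

theorem G18_node_mem_edge : ∀ v ∈ G18.V, ∃ e ∈ G18.E, v ∈ e := by
  decide

/-- The four edges `f₀ ∩ fᵢ` form a cycle on `f₀`, so one of them crosses any split of `f₀`. -/
theorem exists_crossing_petal : ∀ J ∈ f₀.powerset, J.Nonempty → (f₀ \ J).Nonempty →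
    ∃ k ∈ ({f₁, f₂, f₃, f₄} : Finset (Finset ℕ)), (J ∩ k).Nonempty ∧ ((f₀ \ J) ∩ k).Nonempty := by
  decide

/-- for every recursive McCormick relaxation of the example, some point of
`MP^RMC_G` violates one of the six flower inequalities centered at `e₀`; in particular the
flower relaxation is a strict subset of `MP^RMC_G` for every RMC. -/
theorem flower_stronger_than_every_RMC_example (M : RMC G18) :
    (∃ z : Finset ℕ → ℝ, M.MPRMC z ∧
      ¬ ((∀ e ∈ ({f₁, f₂, f₃, f₄} : Finset (Finset ℕ)),
            (∑ v ∈ f₀ \ e, z {v}) + z e - z f₀ ≤ 2) ∧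
          z f₁ + z f₃ - z f₀ ≤ 1 ∧ z f₂ + z f₄ - z f₀ ≤ 1) ∧
      ¬ MPF G18 z) ∧
    (∀ z : Finset ℕ → ℝ, MPF G18 z → M.MPRMC z) := by
  refine ⟨?_, fun z => M.mprmc_of_mpf flowerCovered_G18 G18_node_mem_edge⟩
  have hf₀ : f₀ ∈ G18.E ∪ M.Ebar := mem_union_left _ (by decide)
  obtain ⟨k, hk, hJ, hK⟩ := exists_crossing_petal (M.J f₀) (mem_powerset.2 (M.J_subset hf₀))
    (M.J_ne f₀ hf₀) (M.K_eq_sdiff hf₀ ▸ M.K_ne f₀ hf₀)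
  rw [← M.K_eq_sdiff hf₀] at hK
  have hpetal : k ∈ G18.E ∧ ¬ f₀ ⊆ k ∧ (f₀ \ k).card = 2 ∧ ValidFlowerNeighbors G18 f₀ {k} := by
    unfold ValidFlowerNeighbors
    simp only [mem_insert, mem_singleton] at hk
    rcases hk with rfl | rfl | rfl | rfl <;> decide
  obtain ⟨hkE, hnsub, hcard, hvalid⟩ := hpetal
  obtain ⟨z, hz, hviol⟩ := M.exists_mprmc_not_extFlowerIneq (by decide) hnsub hJ hK
  refine ⟨z, hz, fun ⟨hpetals, _⟩ => hviol ?_, fun hF => hviol (hF.2 f₀ (by decide) {k} hvalid)⟩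
  rw [extFlowerIneq_singleton_iff, hcard]
  exact_mod_cast hpetals k hk
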